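/- If a real number C satisfies γ(a, |C/b|^{1/a}) = Sgn(C)·((k₂ − k₁)/(k₁ + k₂))·Γ(a), then the minimized expected loss satisfies ∫_{-∞}^{∞} L(z + C)·f(z) dz = ((k₁ + k₂)·b / (2·Γ(a)))·Γ-upper(2a, |C/b|^{1/a}). -/

import Mathlib

/-!
Writing `L(w) = k₁ w + (k₁ + k₂) max(-w, 0)` and using that the density is even, has mass one
and mean zero, the expected loss for `C ≥ 0` is `k₁ C + (k₁ + k₂) E[(Z - C)⁺]`. The substitution
`z = b tᵃ` turns `E[(Z - C)⁺]` into `(b Γ(2a, x) - C Γ(a, x)) / (2 Γ(a))` with `x = (C/b)^{1/a}`,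
and the hypothesis says exactly `Γ(a, x) = 2 k₁ Γ(a) / (k₁ + k₂)`, so the terms in `C` cancel.
The case `C < 0` reduces to this one through `L_{k₁,k₂}(w) = L_{k₂,k₁}(-w)`.
-/

open Real MeasureTheory Filter

/-- The asymmetric loss function. -/
noncomputable def asymLoss (k₁ k₂ z : ℝ) : ℝ := if 0 ≤ z then k₁ * z else -k₂ * z

/-- The generalized Gaussian density with mean zero. -/
noncomputable def genGauss (a b z : ℝ) : ℝ :=
  (2 * a * b * Real.Gamma a)⁻¹ * Real.exp (-(|z / b| ^ (1 / a)))

/-- The lower incomplete gamma function. -/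
noncomputable def lowerGamma (p x : ℝ) : ℝ := ∫ t in (0:ℝ)..x, t ^ (p - 1) * Real.exp (-t)

/-- The upper incomplete gamma function. -/
noncomputable def upperGamma (p x : ℝ) : ℝ := ∫ t in Set.Ioi x, t ^ (p - 1) * Real.exp (-t)

/-- The sign function used in the paper: `1` for `c ≥ 0`, `-1` for `c < 0`. -/
noncomputable def Sgn (c : ℝ) : ℝ := if 0 ≤ c then 1 else -1

open Set

lemma image_mul_rpow_Ioi {a b x : ℝ} (ha : 0 < a) (hb : 0 < b) (hx : 0 ≤ x) :
    (fun t : ℝ => b * t ^ a) '' Ioi x = Ioi (b * x ^ a) := by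
  ext v
  constructor
  · rintro ⟨t, ht, rfl⟩
    exact mul_lt_mul_of_pos_left (Real.rpow_lt_rpow hx ht ha) hb
  · intro hv
    have hxv : x ^ a < v / b := (lt_div_iff₀' hb).mpr hv
    have hvb : 0 ≤ v / b := (Real.rpow_nonneg hx a).trans hxv.le
    refine ⟨(v / b) ^ a⁻¹, ?_, ?_⟩
    · simpa [← Real.rpow_mul hx, ha.ne'] using
        Real.rpow_lt_rpow (Real.rpow_nonneg hx a) hxv (inv_pos.mpr ha)
    · simp only
      rw [Real.rpow_inv_rpow hvb ha.ne', mul_div_cancel₀ _ hb.ne']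

lemma strictMonoOn_mul_rpow {a b x : ℝ} (ha : 0 < a) (hb : 0 < b) (hx : 0 ≤ x) :
    StrictMonoOn (fun t : ℝ => b * t ^ a) (Ioi x) := fun _ ht _ _ hlt =>
  mul_lt_mul_of_pos_left (Real.rpow_lt_rpow (hx.trans (le_of_lt ht)) hlt ha) hb

lemma hasDerivWithinAt_mul_rpow {a b x : ℝ} (hx : 0 ≤ x) :
    ∀ t ∈ Ioi x, HasDerivWithinAt (fun t : ℝ => b * t ^ a) (b * (a * t ^ (a - 1))) (Ioi x) t :=
  fun _ ht =>
    ((Real.hasDerivAt_rpow_const (Or.inl (hx.trans_lt ht).ne')).const_mul b).hasDerivWithinAt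

lemma abs_mul_mul_rpow_sub_one {a b t : ℝ} (ha : 0 < a) (hb : 0 < b) (ht : 0 < t) :
    |b * (a * t ^ (a - 1))| = a * b * t ^ (a - 1) := by
  rw [abs_of_nonneg (by positivity)]
  ring

lemma integrableOn_Ioi_mul_rpow_iff {a b x : ℝ} (ha : 0 < a) (hb : 0 < b) (hx : 0 ≤ x)
    (g : ℝ → ℝ) :
    IntegrableOn g (Ioi (b * x ^ a)) ↔
      IntegrableOn (fun t => a * b * t ^ (a - 1) * g (b * t ^ a)) (Ioi x) := by
  rw [← image_mul_rpow_Ioi ha hb hx, integrableOn_image_iff_integrableOn_abs_deriv_smul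
    measurableSet_Ioi (hasDerivWithinAt_mul_rpow hx) (strictMonoOn_mul_rpow ha hb hx).injOn]
  refine integrableOn_congr_fun (fun t ht => ?_) measurableSet_Ioi
  rw [smul_eq_mul, abs_mul_mul_rpow_sub_one ha hb (hx.trans_lt ht)]

lemma integral_Ioi_mul_rpow {a b x : ℝ} (ha : 0 < a) (hb : 0 < b) (hx : 0 ≤ x) (g : ℝ → ℝ) :
    ∫ v in Ioi (b * x ^ a), g v = ∫ t in Ioi x, a * b * t ^ (a - 1) * g (b * t ^ a) := by
  rw [← image_mul_rpow_Ioi ha hb hx, integral_image_eq_integral_abs_deriv_smul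
    measurableSet_Ioi (hasDerivWithinAt_mul_rpow hx) (strictMonoOn_mul_rpow ha hb hx).injOn]
  refine setIntegral_congr_fun measurableSet_Ioi fun t ht => ?_
  rw [smul_eq_mul, abs_mul_mul_rpow_sub_one ha hb (hx.trans_lt ht)]

lemma integrableOn_rpow_sub_one_mul_exp_neg {p x : ℝ} (hp : 0 < p) (hx : 0 ≤ x) :
    IntegrableOn (fun t : ℝ => t ^ (p - 1) * exp (-t)) (Ioi x) :=
  ((Real.GammaIntegral_convergent hp).mono_set (Ioi_subset_Ioi hx)).congr_fun
    (fun _ _ => mul_comm _ _) measurableSet_Ioi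

lemma upperGamma_zero {p : ℝ} (hp : 0 < p) : upperGamma p 0 = Real.Gamma p := by
  simp_rw [upperGamma, Real.Gamma_eq_integral hp, mul_comm]

lemma lowerGamma_add_upperGamma {p x : ℝ} (hp : 0 < p) (hx : 0 ≤ x) :
    lowerGamma p x + upperGamma p x = Real.Gamma p := by
  rw [lowerGamma, upperGamma, intervalIntegral.integral_of_le hx,
    ← setIntegral_union (Ioc_disjoint_Ioi le_rfl) measurableSet_Ioi
      ((integrableOn_rpow_sub_one_mul_exp_neg hp le_rfl).mono_set Ioc_subset_Ioi_self)
      (integrableOn_rpow_sub_one_mul_exp_neg hp hx),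
    Ioc_union_Ioi_eq_Ioi hx, ← upperGamma, upperGamma_zero hp]

lemma mul_rpow_sub_one_mul_rpow_mul_exp_neg {a b s t : ℝ} (ha : 0 < a) (hb : 0 < b)
    (ht : 0 < t) :
    a * b * t ^ (a - 1) * ((b * t ^ a) ^ s * exp (-(b * t ^ a / b) ^ (1 / a))) =
      a * b ^ (s + 1) * (t ^ (a * (s + 1) - 1) * exp (-t)) := by
  rw [mul_div_cancel_left₀ _ hb.ne', ← Real.rpow_mul ht.le, mul_one_div_cancel ha.ne',
    Real.rpow_one, Real.mul_rpow hb.le (by positivity), ← Real.rpow_mul ht.le,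
    Real.rpow_add_one hb.ne', show a * (s + 1) - 1 = (a - 1) + a * s by ring,
    Real.rpow_add ht]
  ring

lemma integrableOn_rpow_mul_exp_neg_div_rpow {a b s x : ℝ} (ha : 0 < a) (hb : 0 < b)
    (hs : -1 < s) (hx : 0 ≤ x) :
    IntegrableOn (fun v => v ^ s * exp (-(v / b) ^ (1 / a))) (Ioi (b * x ^ a)) := by
  rw [integrableOn_Ioi_mul_rpow_iff ha hb hx]
  have hp : 0 < a * (s + 1) := mul_pos ha (by linarith)
  refine IntegrableOn.congr_fun ((integrableOn_rpow_sub_one_mul_exp_neg hp hx).const_mul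
    (a * b ^ (s + 1))) (fun t ht => ?_) measurableSet_Ioi
  exact (mul_rpow_sub_one_mul_rpow_mul_exp_neg ha hb (hx.trans_lt ht)).symm

lemma integral_rpow_mul_exp_neg_div_rpow {a b x : ℝ} (s : ℝ) (ha : 0 < a) (hb : 0 < b)
    (hx : 0 ≤ x) :
    ∫ v in Ioi (b * x ^ a), v ^ s * exp (-(v / b) ^ (1 / a)) =
      a * b ^ (s + 1) * upperGamma (a * (s + 1)) x := by
  rw [integral_Ioi_mul_rpow ha hb hx, upperGamma, ← integral_const_mul]
  exact setIntegral_congr_fun measurableSet_Ioi fun t ht =>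
    mul_rpow_sub_one_mul_rpow_mul_exp_neg ha hb (hx.trans_lt ht)

lemma integrable_comp_abs_of_integrableOn_Ioi {f : ℝ → ℝ} (hf : IntegrableOn f (Ioi 0)) :
    Integrable fun x => f |x| := by
  have hIoi : IntegrableOn (fun x => f |x|) (Ioi 0) :=
    hf.congr_fun (fun x hx => by rw [abs_of_pos hx]) measurableSet_Ioi
  have hIic : IntegrableOn (fun x => f |x|) (Iic 0) := by
    have hneg : MeasurableEmbedding fun x : ℝ => -x := (Homeomorph.neg ℝ).measurableEmbedding
    rw [IntegrableOn, ← Measure.map_neg_eq_self (volume : Measure ℝ), ← IntegrableOn,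
      hneg.integrableOn_map_iff]
    simpa only [Function.comp_def, abs_neg, neg_preimage, neg_Iic, neg_zero] using
      (integrableOn_Ici_iff_integrableOn_Ioi).mpr hIoi
  simpa only [Iic_union_Ioi, integrableOn_univ] using hIic.union hIoi

lemma genGauss_neg (a b z : ℝ) : genGauss a b (-z) = genGauss a b z := by
  rw [genGauss, genGauss, neg_div, abs_neg]

lemma genGauss_nonneg {a b : ℝ} (ha : 0 < a) (hb : 0 < b) (z : ℝ) : 0 ≤ genGauss a b z := by
  have := Real.Gamma_pos_of_pos ha
  unfold genGauss
  positivity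

lemma continuous_genGauss {a : ℝ} (ha : 0 < a) (b : ℝ) : Continuous (genGauss a b) := by
  unfold genGauss
  have := Real.continuous_rpow_const (q := 1 / a) (by positivity)
  fun_prop

lemma genGauss_eq {a b : ℝ} (hb : 0 < b) (z : ℝ) :
    genGauss a b z = (2 * a * b * Real.Gamma a)⁻¹ * exp (-(|z| / b) ^ (1 / a)) := by
  rw [genGauss, abs_div, abs_of_pos hb]

lemma rpow_abs_mul_genGauss {a b : ℝ} (hb : 0 < b) (s z : ℝ) :
    |z| ^ s * genGauss a b z =
      (2 * a * b * Real.Gamma a)⁻¹ * (|z| ^ s * exp (-(|z| / b) ^ (1 / a))) := by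
  rw [genGauss_eq hb]
  ring

lemma mul_zero_rpow {a : ℝ} (ha : 0 < a) (b : ℝ) : b * (0 : ℝ) ^ a = 0 := by
  rw [Real.zero_rpow ha.ne', mul_zero]

lemma integrable_rpow_abs_mul_genGauss {a b s : ℝ} (ha : 0 < a) (hb : 0 < b) (hs : -1 < s) :
    Integrable fun z => |z| ^ s * genGauss a b z := by
  simp_rw [rpow_abs_mul_genGauss hb]
  refine integrable_comp_abs_of_integrableOn_Ioi
    (f := fun v => (2 * a * b * Real.Gamma a)⁻¹ * (v ^ s * exp (-(v / b) ^ (1 / a)))) ?_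
  have := integrableOn_rpow_mul_exp_neg_div_rpow ha hb hs le_rfl
  rw [mul_zero_rpow ha] at this
  exact this.const_mul _

lemma integral_rpow_abs_mul_genGauss {a b : ℝ} (s : ℝ) (ha : 0 < a) (hb : 0 < b)
    (hs : -1 < s) :
    ∫ z, |z| ^ s * genGauss a b z = b ^ s * Real.Gamma (a * (s + 1)) / Real.Gamma a := by
  have := integral_rpow_mul_exp_neg_div_rpow s ha hb le_rfl
  rw [mul_zero_rpow ha, upperGamma_zero (mul_pos ha (by linarith))] at this
  simp_rw [rpow_abs_mul_genGauss hb]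
  rw [integral_comp_abs
    (f := fun v => (2 * a * b * Real.Gamma a)⁻¹ * (v ^ s * exp (-(v / b) ^ (1 / a)))),
    integral_const_mul, this, Real.rpow_add_one hb.ne']
  have := Real.Gamma_pos_of_pos ha
  field_simp

lemma integrable_genGauss {a b : ℝ} (ha : 0 < a) (hb : 0 < b) : Integrable (genGauss a b) := by
  simpa only [Real.rpow_zero, one_mul] using
    integrable_rpow_abs_mul_genGauss (s := 0) ha hb (by norm_num)

lemma integral_genGauss {a b : ℝ} (ha : 0 < a) (hb : 0 < b) : ∫ z, genGauss a b z = 1 := by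
  simpa [(Real.Gamma_pos_of_pos ha).ne'] using integral_rpow_abs_mul_genGauss 0 ha hb (by norm_num)

lemma integrable_mul_genGauss {a b : ℝ} (ha : 0 < a) (hb : 0 < b) :
    Integrable fun z => z * genGauss a b z := by
  refine (integrable_rpow_abs_mul_genGauss (s := 1) ha hb (by norm_num)).mono
    (continuous_id.mul (continuous_genGauss ha b)).aestronglyMeasurable (ae_of_all _ fun z => ?_)
  simp

lemma integral_mul_genGauss (a b : ℝ) : ∫ z, z * genGauss a b z = 0 := by
  have h := integral_neg_eq_self (fun z => z * genGauss a b z) volume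
  simp only [genGauss_neg, neg_mul, integral_neg] at h
  linarith

lemma integral_max_sub_mul_genGauss {a b x : ℝ} (ha : 0 < a) (hb : 0 < b) (hx : 0 ≤ x) :
    ∫ z, max (z - b * x ^ a) 0 * genGauss a b z =
      (b * upperGamma (2 * a) x - b * x ^ a * upperGamma a x) / (2 * Real.Gamma a) := by
  set c := b * x ^ a
  have hc : 0 ≤ c := by positivity
  have hIoi : ∀ z ∈ Ioi c, max (z - c) 0 * genGauss a b z =
      (2 * a * b * Real.Gamma a)⁻¹ * (z ^ (1 : ℝ) * exp (-(z / b) ^ (1 / a)) -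
        c * (z ^ (0 : ℝ) * exp (-(z / b) ^ (1 / a)))) := fun z hz => by
    rw [max_eq_left (sub_nonneg.mpr (le_of_lt hz)), genGauss_eq hb,
      abs_of_pos (hc.trans_lt hz), Real.rpow_one, Real.rpow_zero]
    ring
  rw [← setIntegral_eq_integral_of_forall_compl_eq_zero (s := Ioi c) fun z hz => ?_,
    setIntegral_congr_fun measurableSet_Ioi hIoi, integral_const_mul,
    integral_sub (integrableOn_rpow_mul_exp_neg_div_rpow ha hb (by norm_num) hx)
      ((integrableOn_rpow_mul_exp_neg_div_rpow ha hb (by norm_num) hx).const_mul c),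
    integral_const_mul, integral_rpow_mul_exp_neg_div_rpow 1 ha hb hx,
    integral_rpow_mul_exp_neg_div_rpow 0 ha hb hx]
  · have := Real.Gamma_pos_of_pos ha
    rw [show a * (1 + 1) = 2 * a by ring, zero_add, mul_one, one_add_one_eq_two, Real.rpow_two,
      Real.rpow_one]
    field_simp
  · rw [max_eq_right (by simpa using hz), zero_mul]

lemma asymLoss_eq (k₁ k₂ w : ℝ) : asymLoss k₁ k₂ w = k₁ * w + (k₁ + k₂) * max (-w) 0 := by
  rcases le_or_gt 0 w with hw | hw
  · rw [asymLoss, if_pos hw, max_eq_right (by linarith)]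
    ring
  · rw [asymLoss, if_neg hw.not_ge, max_eq_left (by linarith)]
    ring

lemma asymLoss_neg (k₁ k₂ w : ℝ) : asymLoss k₂ k₁ (-w) = asymLoss k₁ k₂ w := by
  rw [asymLoss_eq, asymLoss_eq, neg_neg]
  rcases le_or_gt 0 w with hw | hw
  · rw [max_eq_left hw, max_eq_right (neg_nonpos.mpr hw)]
    ring
  · rw [max_eq_right hw.le, max_eq_left (neg_nonneg.mpr hw.le)]
    ring

lemma integral_asymLoss_mul_genGauss (k₁ k₂ : ℝ) {a b x : ℝ} (ha : 0 < a) (hb : 0 < b)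
    (hx : 0 ≤ x) :
    ∫ z, asymLoss k₁ k₂ (z + b * x ^ a) * genGauss a b z =
      k₁ * (b * x ^ a) + (k₁ + k₂) *
        ((b * upperGamma (2 * a) x - b * x ^ a * upperGamma a x) / (2 * Real.Gamma a)) := by
  set c := b * x ^ a
  have hshift : Integrable fun z => (z + c) * genGauss a b z :=
    ((integrable_mul_genGauss ha hb).add ((integrable_genGauss ha hb).const_mul c)).congr
      (ae_of_all _ fun z => by simp only [Pi.add_apply]; ring)
  have hshift_eq : ∫ z, (z + c) * genGauss a b z = c := by
    simp_rw [add_mul]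
    rw [integral_add (integrable_mul_genGauss ha hb) ((integrable_genGauss ha hb).const_mul c),
      integral_mul_genGauss, integral_const_mul, integral_genGauss ha hb]
    ring
  have hmax : Integrable fun z => max (-(z + c)) 0 * genGauss a b z :=
    hshift.neg_part.congr (ae_of_all _ fun z => by
      dsimp only
      rw [max_mul_of_nonneg _ _ (genGauss_nonneg ha hb z), zero_mul, neg_mul])
  have hreflect :
      ∫ z, max (-(z + c)) 0 * genGauss a b z = ∫ z, max (z - c) 0 * genGauss a b z := by
    rw [← integral_neg_eq_self]
    simp only [genGauss_neg, neg_add, neg_neg, ← sub_eq_add_neg]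
  calc ∫ z, asymLoss k₁ k₂ (z + c) * genGauss a b z
      = ∫ z, k₁ * ((z + c) * genGauss a b z) +
          (k₁ + k₂) * (max (-(z + c)) 0 * genGauss a b z) := by
        simp only [asymLoss_eq, add_mul, mul_assoc]
    _ = k₁ * c + (k₁ + k₂) * ∫ z, max (z - c) 0 * genGauss a b z := by
        rw [integral_add (hshift.const_mul _) (hmax.const_mul _), integral_const_mul,
          integral_const_mul, hshift_eq, hreflect]
    _ = _ := by rw [integral_max_sub_mul_genGauss ha hb hx]

lemma integral_asymLoss_swap_mul_genGauss (k₁ k₂ a b C : ℝ) :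
    ∫ z, asymLoss k₂ k₁ (z + -C) * genGauss a b z =
      ∫ z, asymLoss k₁ k₂ (z + C) * genGauss a b z := by
  rw [← integral_neg_eq_self]
  simp only [genGauss_neg, ← neg_add, asymLoss_neg]

lemma integral_asymLoss_mul_genGauss_of_lowerGamma_eq {a b k₁ k₂ C : ℝ} (ha : 0 < a)
    (hb : 0 < b) (hk : 0 < k₁ + k₂) (hC0 : 0 ≤ C)
    (hC : lowerGamma a ((C / b) ^ (1 / a)) = (k₂ - k₁) / (k₁ + k₂) * Real.Gamma a) :
    ∫ z, asymLoss k₁ k₂ (z + C) * genGauss a b z =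
      (k₁ + k₂) * b / (2 * Real.Gamma a) * upperGamma (2 * a) ((C / b) ^ (1 / a)) := by
  set x := (C / b) ^ (1 / a)
  have hCb : 0 ≤ C / b := div_nonneg hC0 hb.le
  have hx : 0 ≤ x := Real.rpow_nonneg hCb _
  have hC_eq : b * x ^ a = C := by
    rw [← Real.rpow_mul hCb, one_div_mul_cancel ha.ne', Real.rpow_one, mul_div_cancel₀ _ hb.ne']
  have hupper : upperGamma a x = 2 * k₁ / (k₁ + k₂) * Real.Gamma a := by
    have h := lowerGamma_add_upperGamma ha hx
    rw [hC] at h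
    rw [eq_sub_of_add_eq' h]
    field_simp
    ring
  have := Real.Gamma_pos_of_pos ha
  rw [← hC_eq, integral_asymLoss_mul_genGauss k₁ k₂ ha hb hx, hupper]
  field_simp
  ring

theorem minimized_expected_loss (a b k₁ k₂ : ℝ) (ha : 0 < a) (hb : 0 < b)
    (hk₁ : 0 < k₁) (hk₂ : 0 < k₂) (C : ℝ)
    (hC : lowerGamma a (|C / b| ^ (1 / a)) = Sgn C * ((k₂ - k₁) / (k₁ + k₂)) * Real.Gamma a) :
    ∫ z, asymLoss k₁ k₂ (z + C) * genGauss a b z =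
      (k₁ + k₂) * b / (2 * Real.Gamma a) * upperGamma (2 * a) (|C / b| ^ (1 / a)) := by
  rcases le_or_gt 0 C with hC0 | hC0
  · rw [abs_of_nonneg (div_nonneg hC0 hb.le)] at hC ⊢
    rw [Sgn, if_pos hC0, one_mul] at hC
    exact integral_asymLoss_mul_genGauss_of_lowerGamma_eq ha hb (add_pos hk₁ hk₂) hC0 hC
  · rw [abs_div, abs_of_neg hC0, abs_of_pos hb] at hC ⊢
    rw [Sgn, if_neg hC0.not_ge] at hC
    rw [← integral_asymLoss_swap_mul_genGauss, add_comm k₁ k₂]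
    refine integral_asymLoss_mul_genGauss_of_lowerGamma_eq ha hb (add_pos hk₂ hk₁)
      (neg_nonneg.mpr hC0.le) ?_
    rw [hC, add_comm k₂ k₁]
    ring
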